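/- arXiv:1512.04997 — 5 statements merged into one kernel-verified Lean document; each statement's English description precedes it below -/
import Mathlib

section
/- Let p be a prime, q = p^m, and let I be a finite index set with values i(u) ∈ {0,...,q-1} for u ∈ I. Let s(a) denote the base-p digit sum of a, and τ the cyclic digit-shift map. Suppose that for some positive integer K, Σ_u τ^h(i(u)) ≥ (q-1)K for all 0 ≤ h ≤ m-1 (in particular Σ_u i(u) ≥ (q-1)K). Then Σ_u s(i(u)) ≥ m(p-1)K, using the identity Σ_{h=0}^{m-1} Σ_u τ^h(i(u)) = ((q-1)/(p-1)) Σ_u s(i(u)). -/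
/-!
Writing `b = t * p ^ (m - 1) + r` with `r < p ^ (m - 1)`, one has `p * b = τ b + (q - 1) * t`.
Along the `τ`-orbit of `a` (which has period `m`) the leading digits `t` run through all the
base-`p` digits of `a`, so summing this identity over the orbit gives
`(p - 1) * ∑_h τ^h a = (q - 1) * s a`. Summing over `u` and bounding each of the `m` inner sums
by `(q - 1) * K` yields `(q - 1) * m * (p - 1) * K ≤ (q - 1) * ∑_u s (i u)`.
-/

/-- The cyclic shift of base-`p` digits of `a ∈ {0, …, p^m - 1}`. -/
def tau (p m a : ℕ) : ℕ := a / p ^ (m - 1) + (a % p ^ (m - 1)) * p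

open Finset

theorem Function.IsPeriodicPt.sum_range_iterate_succ {α M : Type*} [AddCancelCommMonoid M]
    {f : α → α} {m : ℕ} {a : α} (ha : Function.IsPeriodicPt f m a) (g : α → M) :
    ∑ h ∈ range m, g (f^[h + 1] a) = ∑ h ∈ range m, g (f^[h] a) := by
  have h := (sum_range_succ' (fun h => g (f^[h] a)) m).symm.trans
    (sum_range_succ (fun h => g (f^[h] a)) m)
  rw [ha.eq, Function.iterate_zero_apply] at h
  exact add_right_cancel h

theorem Nat.sum_digits_eq_sum_range {p : ℕ} (hp : 1 < p) :
    ∀ {m a : ℕ}, a < p ^ m → (Nat.digits p a).sum = ∑ j ∈ range m, a / p ^ j % p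
  | 0, a, ha => by simp_all
  | m + 1, a, ha => by
    rcases Nat.eq_zero_or_pos a with rfl | ha0
    · simp
    rw [Nat.digits_def' hp ha0, List.sum_cons,
      Nat.sum_digits_eq_sum_range hp (Nat.div_lt_of_lt_mul (by rwa [← pow_succ'])),
      sum_range_succ', pow_zero, Nat.div_one, add_comm]
    simp only [Nat.div_div_eq_div_mul, ← pow_succ']

section

variable {p m : ℕ}

theorem tau_mul_pow_add {t r : ℕ} (hr : r < p ^ (m - 1)) :
    tau p m (t * p ^ (m - 1) + r) = t + r * p := by
  have hpos : 0 < p ^ (m - 1) := by omega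
  rw [tau, add_comm (t * _), Nat.add_mul_div_right _ _ hpos, Nat.div_eq_of_lt hr, zero_add,
    Nat.add_mul_mod_self_right, Nat.mod_eq_of_lt hr]

theorem tau_iterate_mul_pow_add :
    ∀ {k n x y : ℕ}, k + n = m → x < p ^ k → y < p ^ n →
      (tau p m)^[k] (x * p ^ n + y) = y * p ^ k + x
  | 0, n, x, y, _, hx, _ => by simp_all
  | k + 1, n, x, y, hkn, hx, hy => by
    have hp : 0 < p := Nat.pos_of_ne_zero (by rintro rfl; simp at hx)
    have hsplit : x * p ^ n + y = x / p * p ^ (n + 1) + (x % p * p ^ n + y) := by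
      conv_lhs => rw [← Nat.div_add_mod' x p]
      ring
    have hlow : x % p * p ^ n + y < p ^ (n + 1) := by
      calc x % p * p ^ n + y < (x % p + 1) * p ^ n := by nlinarith
        _ ≤ p * p ^ n := Nat.mul_le_mul_right _ (Nat.mod_lt x hp)
        _ = p ^ (n + 1) := (pow_succ' p n).symm
    have hhigh : x / p < p ^ k := Nat.div_lt_of_lt_mul (by rwa [← pow_succ'])
    have hm : m - 1 = n + k := by omega
    have hrest : y * p ^ k + x / p < p ^ (m - 1) := by
      calc y * p ^ k + x / p < (y + 1) * p ^ k := by nlinarith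
        _ ≤ p ^ n * p ^ k := Nat.mul_le_mul_right _ hy
        _ = p ^ (m - 1) := by rw [hm, pow_add]
    rw [Function.iterate_succ_apply', hsplit,
      tau_iterate_mul_pow_add (by omega) hhigh hlow]
    calc tau p m ((x % p * p ^ n + y) * p ^ k + x / p)
        = tau p m (x % p * p ^ (m - 1) + (y * p ^ k + x / p)) := by
          rw [hm, pow_add]; ring_nf
      _ = y * p ^ (k + 1) + x := by
          rw [tau_mul_pow_add hrest, pow_succ]
          conv_rhs => rw [← Nat.div_add_mod' x p]
          ring

theorem isPeriodicPt_tau {a : ℕ} (ha : a < p ^ m) : Function.IsPeriodicPt (tau p m) m a := by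
  simpa [Function.IsPeriodicPt, Function.IsFixedPt] using
    tau_iterate_mul_pow_add (m := m) (n := 0) (y := 0) (add_zero m) ha (by simp)

theorem tau_iterate_succ_mod {h a : ℕ} (hh : h < m) (ha : a < p ^ m) :
    (tau p m)^[h + 1] a % p = a / p ^ (m - 1 - h) % p := by
  have hp : 0 < p := Nat.pos_of_ne_zero (by rintro rfl; rw [zero_pow (by omega)] at ha; omega)
  obtain ⟨n, hn, hnm⟩ : ∃ n, m - 1 - h = n ∧ h + 1 + n = m := ⟨_, rfl, by omega⟩
  have hhigh : a / p ^ n < p ^ (h + 1) :=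
    Nat.div_lt_of_lt_mul (by rwa [← pow_add, add_comm, hnm])
  have hrot : (tau p m)^[h + 1] a = a % p ^ n * p ^ h * p + a / p ^ n := by
    conv_lhs => rw [← Nat.div_add_mod' a (p ^ n)]
    rw [tau_iterate_mul_pow_add hnm hhigh (Nat.mod_lt _ (by positivity)), pow_succ, mul_assoc]
  rw [hrot, hn, add_comm, Nat.add_mul_mod_self_right]

theorem pow_pred_mul_self (hm : 0 < m) : p ^ (m - 1) * p = p ^ m := by
  rw [← pow_succ, Nat.sub_add_cancel hm]

theorem div_pow_pred_lt (hm : 0 < m) {b : ℕ} (hb : b < p ^ m) : b / p ^ (m - 1) < p :=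
  Nat.div_lt_of_lt_mul (by rwa [pow_pred_mul_self hm])

theorem tau_lt (hm : 0 < m) {b : ℕ} (hb : b < p ^ m) : tau p m b < p ^ m := by
  rw [← pow_pred_mul_self hm] at hb ⊢
  have hr := Nat.mod_lt b (Nat.pos_of_mul_pos_right (by omega : 0 < p ^ (m - 1) * p))
  calc tau p m b < (b % p ^ (m - 1) + 1) * p := by
        rw [tau]; nlinarith [div_pow_pred_lt hm (hb.trans_eq (pow_pred_mul_self hm))]
    _ ≤ p ^ (m - 1) * p := Nat.mul_le_mul_right _ hr

theorem tau_mod (hm : 0 < m) {b : ℕ} (hb : b < p ^ m) : tau p m b % p = b / p ^ (m - 1) := by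
  rw [tau, Nat.add_mul_mod_self_right, Nat.mod_eq_of_lt (div_pow_pred_lt hm hb)]

theorem mul_add_div_eq_tau_add (hm : 0 < m) (b : ℕ) :
    p * b + b / p ^ (m - 1) = tau p m b + p ^ m * (b / p ^ (m - 1)) := by
  have hb := Nat.div_add_mod b (p ^ (m - 1))
  rw [tau, ← pow_pred_mul_self hm]
  linear_combination p * hb.symm

theorem sub_one_mul_sum_tau_iterate (hp : 1 < p) (hm : 0 < m) {a : ℕ} (ha : a < p ^ m) :
    (p - 1) * ∑ h ∈ range m, (tau p m)^[h] a = (p ^ m - 1) * (Nat.digits p a).sum := by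
  have hiter : ∀ h, (tau p m)^[h] a < p ^ m := fun h =>
    Set.MapsTo.iterate (s := Set.Iio (p ^ m)) (fun _ hb => tau_lt hm hb) h ha
  have hstep : ∀ h ∈ range m, p * (tau p m)^[h] a + a / p ^ (m - 1 - h) % p
      = (tau p m)^[h + 1] a + p ^ m * (a / p ^ (m - 1 - h) % p) := by
    intro h hh
    rw [← tau_iterate_succ_mod (mem_range.mp hh) ha, Function.iterate_succ_apply',
      tau_mod hm (hiter h)]
    exact mul_add_div_eq_tau_add hm _
  have hshift : ∑ h ∈ range m, (tau p m)^[h + 1] a = ∑ h ∈ range m, (tau p m)^[h] a :=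
    (isPeriodicPt_tau ha).sum_range_iterate_succ id
  have hsum := sum_congr rfl hstep
  rw [sum_add_distrib, sum_add_distrib, ← mul_sum, ← mul_sum, hshift,
    sum_range_reflect (fun j => a / p ^ j % p), ← Nat.sum_digits_eq_sum_range hp ha] at hsum
  rw [Nat.sub_one_mul, Nat.sub_one_mul]
  omega

end

theorem stmt4_general (p m K : ℕ) (hp : p.Prime) (hm : 0 < m)
    (ι : Type*) [Fintype ι] (i : ι → ℕ) (hi : ∀ u, i u < p ^ m)
    (h : ∀ h' < m, (p ^ m - 1) * K ≤ ∑ u, (tau p m)^[h'] (i u)) :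
    m * (p - 1) * K ≤ ∑ u, (Nat.digits p (i u)).sum := by
  have hq : 0 < p ^ m - 1 := Nat.sub_pos_of_lt (Nat.one_lt_pow hm.ne' hp.one_lt)
  have hsum : (p - 1) * ∑ h' ∈ range m, ∑ u, (tau p m)^[h'] (i u)
      = (p ^ m - 1) * ∑ u, (Nat.digits p (i u)).sum := by
    rw [sum_comm, mul_sum, mul_sum]
    exact sum_congr rfl fun u _ => sub_one_mul_sum_tau_iterate hp.one_lt hm (hi u)
  have hlow : m * ((p ^ m - 1) * K) ≤ ∑ h' ∈ range m, ∑ u, (tau p m)^[h'] (i u) := by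
    simpa using card_nsmul_le_sum (range m) _ _ fun h' hh' => h h' (mem_range.mp hh')
  refine Nat.le_of_mul_le_mul_left ?_ hq
  calc (p ^ m - 1) * (m * (p - 1) * K) = (p - 1) * (m * ((p ^ m - 1) * K)) := by ring
    _ ≤ (p ^ m - 1) * ∑ u, (Nat.digits p (i u)).sum := hsum ▸ Nat.mul_le_mul_left _ hlow

/-- If `Σ_u τ^h(i(u)) ≥ (q-1)K` for all `0 ≤ h ≤ m-1`, then `Σ_u s(i(u)) ≥ m(p-1)K`,
where `s` is the base-`p` digit sum. -/
theorem stmt4 (p m K : ℕ) (hp : p.Prime) (hm : 0 < m) (hK : 0 < K)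
    (ι : Type*) [Fintype ι] (i : ι → ℕ) (hi : ∀ u, i u < p ^ m)
    (h : ∀ h' < m, (p ^ m - 1) * K ≤ ∑ u, (tau p m)^[h'] (i u)) :
    m * (p - 1) * K ≤ ∑ u, (Nat.digits p (i u)).sum :=
  stmt4_general p m K hp hm ι i hi h
end

section
/- Let p be a prime, q = p^m, n ≥ 1, d ≥ 2, and let i : U_d → {0,...,q-1} satisfy that Σ_u i(u)·u ≡ 0 (mod q-1) componentwise and i is not identically zero. Let k be the number of nonzero components of Σ_u i(u)·u. Then Σ_u s(i(u)) + m(p-1)(n-k) ≥ m(p-1)⌈n/d⌉, where s denotes the base-p digit sum. -/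
open Finset

/-!
Rotating the `m` base-`p` digits of `a < p ^ m` by `t` places gives a number congruent to
`p ^ t * a` modulo `q - 1`, which is zero exactly when `a` is, and the `m` rotations of `a` add up
to `s(a) (q - 1) / (p - 1)`. Rotating every `i(u)` by the same `t` therefore keeps the
congruences and the set of `k` nonzero columns. Each nonzero column sum is then at least `q - 1`,
and since `|u| ≤ d` the total `Σ_u i(u)` is at least `k (q - 1) / d`, hence, being a multiple of
`q - 1`, at least `⌈k/d⌉ (q - 1)`. Summing over the `m` rotations gives
`Σ_u s(i(u)) ≥ m (p - 1) ⌈k/d⌉`, and `⌈n/d⌉ ≤ ⌈k/d⌉ + (n - k)`.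
-/

theorem Nat.mod_pow_eq_sum_div_pow_mod (a p m : ℕ) :
    a % p ^ m = ∑ s ∈ range m, a / p ^ s % p * p ^ s := by
  induction m with
  | zero => simp [Nat.mod_one]
  | succ m ih => rw [Nat.mod_pow_succ, ih, sum_range_succ, mul_comm (p ^ m)]

theorem Nat.digits_sum_eq_sum_div_pow_mod {p m a : ℕ} (hp : 1 < p) (ha : a < p ^ m) :
    (p.digits a).sum = ∑ s ∈ range m, a / p ^ s % p := by
  induction m generalizing a with
  | zero => simp_all
  | succ m ih =>
    rcases a.eq_zero_or_pos with rfl | ha0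
    · simp
    rw [Nat.digits_def' hp ha0, List.sum_cons, sum_range_succ', pow_zero, Nat.div_one, add_comm]
    simp only [pow_succ', ← Nat.div_div_eq_div_mul]
    rw [ih (Nat.div_lt_of_lt_mul (by rwa [← pow_succ']))]

theorem Finset.sum_range_add_mod {M : Type*} [AddCommMonoid M] (f : ℕ → M) (m s : ℕ) :
    ∑ t ∈ range m, f ((s + t) % m) = ∑ t ∈ range m, f t := by
  rcases m with _ | m
  · simp
  rw [← Fin.sum_univ_eq_sum_range (fun t => f ((s + t) % (m + 1))), ← Fin.sum_univ_eq_sum_range]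
  calc ∑ t : Fin (m + 1), f ((s + t) % (m + 1))
      = ∑ t : Fin (m + 1), f (Fin.ofNat (m + 1) s + t).val := by simp [Fin.val_add, Nat.add_mod]
    _ = _ := Equiv.sum_comp (Equiv.addLeft (Fin.ofNat (m + 1) s)) (fun t : Fin (m + 1) => f t)

theorem natCast_pow_eq_one_zmod_pow_sub_one {p : ℕ} (hp : 0 < p) (m : ℕ) :
    (p : ZMod (p ^ m - 1)) ^ m = 1 := by
  have h := ZMod.natCast_self (p ^ m - 1)
  rwa [Nat.cast_sub (Nat.one_le_pow _ _ hp), Nat.cast_pow, Nat.cast_one, sub_eq_zero] at h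

def digitRotate (p m t a : ℕ) : ℕ :=
  ∑ s ∈ range m, a / p ^ s % p * p ^ ((s + t) % m)

section digitRotate

variable {p m : ℕ}

theorem natCast_digitRotate (hp : 0 < p) (t : ℕ) {a : ℕ} (ha : a < p ^ m) :
    (digitRotate p m t a : ZMod (p ^ m - 1)) = p ^ t * a := by
  conv_rhs => rw [← Nat.mod_eq_of_lt ha, Nat.mod_pow_eq_sum_div_pow_mod]
  simp only [digitRotate, Nat.cast_sum, Nat.cast_mul, Nat.cast_pow, mul_sum]
  refine sum_congr rfl fun s _ => ?_
  rw [← pow_eq_pow_mod _ (natCast_pow_eq_one_zmod_pow_sub_one hp m), pow_add]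
  ring

theorem digitRotate_eq_zero_iff (hp : 0 < p) (t : ℕ) {a : ℕ} (ha : a < p ^ m) :
    digitRotate p m t a = 0 ↔ a = 0 := by
  conv_rhs => rw [← Nat.mod_eq_of_lt ha, Nat.mod_pow_eq_sum_div_pow_mod]
  simp [digitRotate, sum_eq_zero_iff, hp.ne']

theorem sub_one_mul_sum_digitRotate (hp : 1 < p) {a : ℕ} (ha : a < p ^ m) :
    (p - 1) * ∑ t ∈ range m, digitRotate p m t a = (p ^ m - 1) * (p.digits a).sum := by
  simp only [digitRotate, Nat.digits_sum_eq_sum_div_pow_mod hp ha]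
  rw [sum_comm, ← geom_sum_mul_of_one_le hp.le, mul_sum, mul_sum]
  refine sum_congr rfl fun s _ => ?_
  rw [← mul_sum, sum_range_add_mod (p ^ ·)]
  ring

end digitRotate

theorem dvd_sum_mul_of_natCast_eq_mul {α : Type*} {N : ℕ} (c : ZMod N) (s : Finset α)
    {w w' : α → ℕ} (hw : ∀ a ∈ s, (w' a : ZMod N) = c * w a) (x : α → ℕ)
    (h : N ∣ ∑ a ∈ s, w a * x a) : N ∣ ∑ a ∈ s, w' a * x a := by
  rw [← ZMod.natCast_eq_zero_iff] at h ⊢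
  push_cast at h ⊢
  rw [sum_congr rfl fun a ha => by rw [hw a ha, mul_assoc], ← mul_sum, h, mul_zero]

section ColumnSums

variable {ι : Type*} [Fintype ι] (s : Finset (ι → ℕ)) (w : (ι → ℕ) → ℕ)

theorem card_mul_le_mul_sum {N d : ℕ} (hs : ∀ u ∈ s, ∑ j, u j ≤ d)
    (hcol : ∀ j, N ∣ ∑ u ∈ s, w u * u j) :
    #{j | ∑ u ∈ s, w u * u j ≠ 0} * N ≤ d * ∑ u ∈ s, w u :=
  calc #{j | ∑ u ∈ s, w u * u j ≠ 0} * N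
      = ∑ j ∈ {j | ∑ u ∈ s, w u * u j ≠ 0}, N := by rw [sum_const, smul_eq_mul]
    _ ≤ ∑ j ∈ {j | ∑ u ∈ s, w u * u j ≠ 0}, ∑ u ∈ s, w u * u j :=
      sum_le_sum fun j hj => Nat.le_of_dvd (Nat.pos_of_ne_zero (mem_filter.mp hj).2) (hcol j)
    _ ≤ ∑ j, ∑ u ∈ s, w u * u j := sum_le_sum_of_subset (filter_subset _ _)
    _ = ∑ u ∈ s, w u * ∑ j, u j := by rw [sum_comm]; simp only [mul_sum]
    _ ≤ ∑ u ∈ s, w u * d := sum_le_sum fun u hu => Nat.mul_le_mul_left _ (hs u hu)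
    _ = d * ∑ u ∈ s, w u := by rw [← sum_mul, mul_comm]

theorem ceil_div_mul_le_sum {N d : ℕ} (hN : 0 < N) (hs : ∀ u ∈ s, ∑ j, u j ≤ d)
    (hdvd : N ∣ ∑ u ∈ s, w u) (hcol : ∀ j, N ∣ ∑ u ∈ s, w u * u j) :
    ⌈(#{j | ∑ u ∈ s, w u * u j ≠ 0} : ℚ) / d⌉₊ * N ≤ ∑ u ∈ s, w u := by
  obtain ⟨c, hc⟩ := hdvd
  have hk : #{j | ∑ u ∈ s, w u * u j ≠ 0} ≤ c * d := by
    have := card_mul_le_mul_sum s w hs hcol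
    rw [hc] at this
    exact Nat.le_of_mul_le_mul_right (by linarith) hN
  rw [hc, mul_comm N]
  refine Nat.mul_le_mul_right _ (Nat.ceil_le.mpr ?_)
  exact div_le_of_le_mul₀ (by positivity) (by positivity) (by exact_mod_cast hk)

end ColumnSums

theorem mul_ceil_div_le_sum_digits_sum {ι : Type*} [Fintype ι] {p m d : ℕ} (hp : 1 < p)
    (hm : 0 < m) (s : Finset (ι → ℕ)) (w : (ι → ℕ) → ℕ)
    (hs : ∀ u ∈ s, ∑ j, u j ≤ d) (hw : ∀ u ∈ s, w u < p ^ m)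
    (hdvd : (p ^ m - 1) ∣ ∑ u ∈ s, w u)
    (hcol : ∀ j, (p ^ m - 1) ∣ ∑ u ∈ s, w u * u j) :
    m * (p - 1) * ⌈(#{j | ∑ u ∈ s, w u * u j ≠ 0} : ℚ) / d⌉₊ ≤
      ∑ u ∈ s, (p.digits (w u)).sum := by
  set K := ⌈(#{j | ∑ u ∈ s, w u * u j ≠ 0} : ℚ) / d⌉₊
  have hN : 0 < p ^ m - 1 := Nat.sub_pos_of_lt (Nat.one_lt_pow hm.ne' hp)
  have hrot : ∀ t, K * (p ^ m - 1) ≤ ∑ u ∈ s, digitRotate p m t (w u) := by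
    intro t
    have hcast : ∀ u ∈ s, (digitRotate p m t (w u) : ZMod (p ^ m - 1)) = p ^ t * w u :=
      fun u hu => natCast_digitRotate (by omega) t (hw u hu)
    have hJ : #{j | ∑ u ∈ s, digitRotate p m t (w u) * u j ≠ 0} =
        #{j | ∑ u ∈ s, w u * u j ≠ 0} := by
      refine congrArg card (filter_congr fun j _ => ?_)
      simp only [ne_eq, sum_eq_zero_iff, mul_eq_zero]
      exact not_congr <| forall₂_congr fun u hu => by
        rw [digitRotate_eq_zero_iff (by omega) t (hw u hu)]
    simp only [K, ← hJ]
    refine ceil_div_mul_le_sum s _ hN hs ?_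
      fun j => dvd_sum_mul_of_natCast_eq_mul _ s hcast _ (hcol j)
    simpa using dvd_sum_mul_of_natCast_eq_mul _ s hcast (fun _ => 1) (by simpa using hdvd)
  refine Nat.le_of_mul_le_mul_right ?_ hN
  calc m * (p - 1) * K * (p ^ m - 1) = (p - 1) * ∑ _t ∈ range m, K * (p ^ m - 1) := by
        rw [sum_const, card_range, smul_eq_mul]; ring
    _ ≤ (p - 1) * ∑ t ∈ range m, ∑ u ∈ s, digitRotate p m t (w u) := by
        gcongr with t; exact hrot t
    _ = ∑ u ∈ s, (p - 1) * ∑ t ∈ range m, digitRotate p m t (w u) := by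
        rw [sum_comm, mul_sum]
    _ = ∑ u ∈ s, (p ^ m - 1) * (p.digits (w u)).sum :=
      sum_congr rfl fun u hu => sub_one_mul_sum_digitRotate hp (hw u hu)
    _ = (∑ u ∈ s, (p.digits (w u)).sum) * (p ^ m - 1) := by rw [← mul_sum, mul_comm]

theorem ceil_div_le_ceil_div_add_sub {k n d : ℕ} (hkn : k ≤ n) (hd : 1 ≤ d) :
    ⌈(n : ℚ) / d⌉₊ ≤ ⌈(k : ℚ) / d⌉₊ + (n - k) := by
  rw [← Nat.ceil_add_natCast (by positivity)]
  refine Nat.ceil_le_ceil ?_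
  calc (n : ℚ) / d = k / d + ((n - k : ℕ) : ℚ) / d := by push_cast [hkn]; ring
    _ ≤ k / d + ((n - k : ℕ) : ℚ) :=
      add_le_add_right (div_le_self (Nat.cast_nonneg _) (Nat.one_le_cast.mpr hd)) _

theorem stmt8_general (p m n d : ℕ) (hp : p.Prime) (hm : 0 < m) (hd : 2 ≤ d)
    (i : (Fin n → ℕ) →₀ ℕ)
    (hsupp : ∀ u ∈ i.support, ∑ j, u j ≤ d)
    (hval : ∀ u, i u < p ^ m)
    (hdvd0 : (p ^ m - 1) ∣ ∑ u ∈ i.support, i u)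
    (hdvd : ∀ j : Fin n, (p ^ m - 1) ∣ ∑ u ∈ i.support, i u * u j) :
    m * (p - 1) * ⌈(n : ℚ) / (d : ℚ)⌉₊ ≤
      (∑ u ∈ i.support, (Nat.digits p (i u)).sum) +
        m * (p - 1) *
          (n - (Finset.univ.filter fun j : Fin n =>
            (∑ u ∈ i.support, i u * u j) ≠ 0).card) := by
  have hk : #{j | ∑ u ∈ i.support, i u * u j ≠ 0} ≤ n :=
    (card_filter_le _ _).trans_eq (card_fin n)
  calc m * (p - 1) * ⌈(n : ℚ) / d⌉₊
      ≤ m * (p - 1) * (⌈(#{j | ∑ u ∈ i.support, i u * u j ≠ 0} : ℚ) / d⌉₊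
          + (n - #{j | ∑ u ∈ i.support, i u * u j ≠ 0})) :=
        Nat.mul_le_mul_left _ (ceil_div_le_ceil_div_add_sub hk (by omega))
    _ ≤ _ := by
      rw [mul_add]
      gcongr
      exact mul_ceil_div_le_sum_digits_sum hp.one_lt hm i.support i hsupp (fun u _ => hval u)
        hdvd0 hdvd

/-- If `i : U_d → {0,…,q-1}` is not identically zero, `Σ_u i(u)` and each component of
`Σ_u i(u)·u` are divisible by `q - 1`, and `k` is the number of nonzero components of
`Σ_u i(u)·u`, then `Σ_u s(i(u)) + m(p-1)(n-k) ≥ m(p-1)⌈n/d⌉`. -/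
theorem stmt8 (p m n d : ℕ) (hp : p.Prime) (hm : 0 < m) (hn : 1 ≤ n) (hd : 2 ≤ d)
    (i : (Fin n → ℕ) →₀ ℕ)
    (hsupp : ∀ u ∈ i.support, ∑ j, u j ≤ d)
    (hval : ∀ u, i u < p ^ m) (hne : i ≠ 0)
    (hdvd0 : (p ^ m - 1) ∣ ∑ u ∈ i.support, i u)
    (hdvd : ∀ j : Fin n, (p ^ m - 1) ∣ ∑ u ∈ i.support, i u * u j) :
    m * (p - 1) * ⌈(n : ℚ) / (d : ℚ)⌉₊ ≤
      (∑ u ∈ i.support, (Nat.digits p (i u)).sum) +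
        m * (p - 1) *
          (n - (Finset.univ.filter fun j : Fin n =>
            (∑ u ∈ i.support, i u * u j) ≠ 0).card) :=
  stmt8_general p m n d hp hm hd i hsupp hval hdvd0 hdvd
end

section
/- Let q = 2^m, n ≥ 4 even, d = n/2. Let I be the set of functions i : U_{n/2} → {0,...,q-1} such that every component of Σ_u i(u)·u is a positive multiple of q-1, and Σ_u i(u)^{(j)} = 2 for all binary digit positions 0 ≤ j ≤ m-1. Then i ∈ I if and only if there exist u_j, v_j ∈ {0,1}^n for 0 ≤ j ≤ m-1 with |u_j| = |v_j| = n/2 and u_j + v_j = (1,...,1), such that for each j: i(u_j)^{(j)} = i(v_j)^{(j)} = 1 and i(u)^{(j)} = 0 for all u ∈ U_{n/2} \ {u_j, v_j}. -/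
/-!
Write `i u = ∑ⱼ 2ʲ i(u)^{(j)}`. Then the `l`-th component of `∑ᵤ i(u)·u` is `∑ⱼ 2ʲ Aⱼ l`, where
`Aⱼ` is the sum of the `u` whose `j`-th digit `i(u)^{(j)}` is `1`; by the digit condition there
are exactly two of them. The digit condition also gives `∑ᵤ i u = 2(q - 1)`, so by `|u| ≤ n/2` the
components of `∑ᵤ i(u)·u` add up to at most `n(q - 1)`. Being positive multiples of `q - 1`, each
of them is `q - 1`, and every `u` in the support has `|u| = n/2`. Thus `∑ⱼ 2ʲ Aⱼ l = 2^m - 1` for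
all `l` while `∑ₗ Aⱼ l = n`, which forces `Aⱼ = (1, …, 1)`, starting from the top digit.
-/

open Finset

theorem Nat.sum_range_two_pow_mul_div_two_pow_mod_two {m a : ℕ} (ha : a < 2 ^ m) :
    ∑ j ∈ range m, 2 ^ j * (a / 2 ^ j % 2) = a := by
  induction m generalizing a with
  | zero => simp_all
  | succ m ih =>
    have hhalf : a / 2 < 2 ^ m := by rw [pow_succ] at ha; omega
    have hshift (j : ℕ) :
        2 ^ (j + 1) * (a / 2 ^ (j + 1) % 2) = 2 * (2 ^ j * (a / 2 / 2 ^ j % 2)) := by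
      rw [Nat.div_div_eq_div_mul, pow_succ, mul_comm 2 (2 ^ j)]
      ring
    rw [sum_range_succ', sum_congr rfl fun j _ => hshift j, ← mul_sum, ih hhalf]
    omega

theorem Nat.sum_range_two_pow (m : ℕ) : ∑ j ∈ range m, 2 ^ j = 2 ^ m - 1 := by
  simpa using Nat.geomSum_eq le_rfl m

theorem Finset.sum_mul_eq_sum_range_two_pow_mul {α : Type*} (s : Finset α) {m : ℕ} {w : α → ℕ}
    (hw : ∀ x ∈ s, w x < 2 ^ m) (g : α → ℕ) :
    ∑ x ∈ s, w x * g x = ∑ j ∈ range m, 2 ^ j * ∑ x ∈ s, w x / 2 ^ j % 2 * g x := by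
  calc ∑ x ∈ s, w x * g x = ∑ x ∈ s, ∑ j ∈ range m, 2 ^ j * (w x / 2 ^ j % 2 * g x) :=
        sum_congr rfl fun x hx => by
          conv_lhs => rw [← Nat.sum_range_two_pow_mul_div_two_pow_mod_two (hw x hx)]
          simp only [sum_mul, mul_assoc]
    _ = _ := by rw [sum_comm]; simp only [mul_sum]

theorem Finset.sum_eq_and_sum_eq_of_double_count {α ι : Type*} [Fintype ι] {s : Finset α}
    {w : α → ℕ} {g : α → ι → ℕ} {c d : ℕ} (hw : ∀ x ∈ s, w x ≠ 0) (hd : ∀ x ∈ s, ∑ l, g x l ≤ d)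
    (hc : ∀ l, c ≤ ∑ x ∈ s, w x * g x l) (htotal : (∑ x ∈ s, w x) * d = Fintype.card ι * c) :
    (∀ l, ∑ x ∈ s, w x * g x l = c) ∧ ∀ x ∈ s, ∑ l, g x l = d := by
  have hrows : ∑ x ∈ s, w x * ∑ l, g x l ≤ ∑ x ∈ s, w x * d :=
    sum_le_sum fun x hx => Nat.mul_le_mul_left _ (hd x hx)
  have hcols : ∑ _l : ι, c ≤ ∑ l, ∑ x ∈ s, w x * g x l := sum_le_sum fun l _ => hc l
  have hswap : ∑ l, ∑ x ∈ s, w x * g x l = ∑ x ∈ s, w x * ∑ l, g x l := by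
    rw [sum_comm]; simp only [mul_sum]
  have hends : ∑ x ∈ s, w x * d = ∑ _l : ι, c := by
    rw [← sum_mul, htotal, sum_const, card_univ, smul_eq_mul]
  refine ⟨fun l => ?_, fun x hx => ?_⟩
  · exact ((sum_eq_sum_iff_of_le fun l _ => hc l).1 (by omega) l (mem_univ l)).symm
  · exact Nat.eq_of_mul_eq_mul_left (Nat.pos_of_ne_zero (hw x hx))
      ((sum_eq_sum_iff_of_le fun x hx => Nat.mul_le_mul_left _ (hd x hx)).1 (by omega) x hx)

/-- From the top: `2 ^ m * a m l ≤ 2 ^ (m + 1) - 1` gives `a m l ≤ 1`, and the column sum then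
forces `a m l = 1`. -/
theorem eq_one_of_sum_range_two_pow_mul_eq {ι : Type*} [Fintype ι] {m : ℕ} {a : ℕ → ι → ℕ}
    (h : ∀ l, ∑ j ∈ range m, 2 ^ j * a j l = 2 ^ m - 1)
    (hcard : ∀ j < m, ∑ l, a j l = Fintype.card ι) : ∀ j < m, ∀ l, a j l = 1 := by
  induction m with
  | zero => simp
  | succ m ih =>
    have htop_le (l : ι) : a m l ≤ 1 := by
      have hle := single_le_sum (f := fun j => 2 ^ j * a j l) (fun _ _ => Nat.zero_le _)
        (self_mem_range_succ m)
      rw [h l, pow_succ] at hle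
      by_contra! hgt
      have := Nat.mul_le_mul_left (2 ^ m) hgt
      have := Nat.two_pow_pos m
      omega
    have htop : ∀ l, a m l = 1 := by
      have hsum : ∑ l, a m l = ∑ _l : ι, 1 := by simp [hcard m m.lt_succ_self]
      exact fun l => (sum_eq_sum_iff_of_le fun l _ => htop_le l).1 hsum l (mem_univ l)
    have hrest (l : ι) : ∑ j ∈ range m, 2 ^ j * a j l = 2 ^ m - 1 := by
      have := h l
      rw [sum_range_succ, htop l, pow_succ] at this
      omega
    intro j hj
    rcases Nat.lt_succ_iff_lt_or_eq.1 hj with hj | rfl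
    · exact ih hrest (fun j hj => hcard j (hj.trans m.lt_succ_self)) j hj
    · exact htop

def Finsupp.digitSupport {α : Type*} (i : α →₀ ℕ) (j : ℕ) : Finset α :=
  {u ∈ i.support | i u / 2 ^ j % 2 = 1}

namespace Finsupp

variable {α : Type*} {i : α →₀ ℕ} {j : ℕ}

theorem mem_digitSupport {u : α} : u ∈ i.digitSupport j ↔ i u / 2 ^ j % 2 = 1 := by
  simp only [digitSupport, mem_filter, mem_support_iff, and_iff_right_iff_imp]
  intro h h0
  simp [h0] at h

theorem digitSupport_subset_support : i.digitSupport j ⊆ i.support := filter_subset _ _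

theorem sum_digit_mul (j : ℕ) (g : α → ℕ) :
    ∑ u ∈ i.support, i u / 2 ^ j % 2 * g u = ∑ u ∈ i.digitSupport j, g u := by
  rw [digitSupport, sum_filter]
  refine Finset.sum_congr rfl fun u _ => ?_
  rcases Nat.mod_two_eq_zero_or_one (i u / 2 ^ j) with h | h <;> simp [h]

theorem sum_digit (j : ℕ) : ∑ u ∈ i.support, i u / 2 ^ j % 2 = #(i.digitSupport j) := by
  simpa using sum_digit_mul (i := i) j 1

theorem digitSupport_eq_pair_iff [DecidableEq α] {p : α → Prop} (hp : ∀ u ∈ i.support, p u)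
    {u v : α} :
    i.digitSupport j = {u, v} ↔ i u / 2 ^ j % 2 = 1 ∧ i v / 2 ^ j % 2 = 1 ∧
      ∀ w, p w → w ≠ u → w ≠ v → i w / 2 ^ j % 2 = 0 := by
  constructor
  · intro h
    refine ⟨mem_digitSupport.1 (by simp [h]), mem_digitSupport.1 (by simp [h]),
      fun w _ hwu hwv => ?_⟩
    have : w ∉ i.digitSupport j := by simp [h, hwu, hwv]
    rw [mem_digitSupport] at this
    omega
  · rintro ⟨hu, hv, hzero⟩
    ext w
    rw [mem_digitSupport, mem_insert, mem_singleton]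
    refine ⟨fun hw => ?_, by rintro (rfl | rfl) <;> assumption⟩
    by_contra! hne
    have hsupp : w ∈ i.support := (mem_filter.1 (mem_digitSupport.2 hw)).1
    have := hzero w (hp w hsupp) hne.1 hne.2
    omega

end Finsupp

section

variable {m n : ℕ} {i : (Fin n → ℕ) →₀ ℕ}

theorem col_sums_eq_and_weight_eq_half (heven : Even n)
    (hsupp : ∀ u ∈ i.support, ∑ l, u l ≤ n / 2) (hval : ∀ u, i u < 2 ^ m)
    (hcol : ∀ l : Fin n, ∃ c > 0, ∑ u ∈ i.support, i u * u l = c * (2 ^ m - 1))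
    (hdig : ∀ j < m, ∑ u ∈ i.support, i u / 2 ^ j % 2 = 2) :
    (∀ l, ∑ u ∈ i.support, i u * u l = 2 ^ m - 1) ∧ ∀ u ∈ i.support, ∑ l, u l = n / 2 := by
  have htotal : ∑ u ∈ i.support, i u = 2 * (2 ^ m - 1) := by
    have := sum_mul_eq_sum_range_two_pow_mul i.support (fun u _ => hval u) 1
    simp only [Pi.one_apply, mul_one] at this
    rw [this, sum_congr rfl fun j hj => by rw [hdig j (mem_range.1 hj)], ← sum_mul,
      Nat.sum_range_two_pow, mul_comm]
  refine sum_eq_and_sum_eq_of_double_count (fun u hu => Finsupp.mem_support_iff.1 hu) hsupp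
    (fun l => ?_) ?_
  · obtain ⟨c, hc, hceq⟩ := hcol l
    rw [hceq]
    exact Nat.le_mul_of_pos_left _ hc
  · obtain ⟨k, rfl⟩ := heven
    rw [htotal, Fintype.card_fin, show (k + k) / 2 = k by omega]
    ring

theorem exists_digitSupport_eq_pair (heven : Even n)
    (hsupp : ∀ u ∈ i.support, ∑ l, u l ≤ n / 2) (hval : ∀ u, i u < 2 ^ m)
    (hcol : ∀ l : Fin n, ∃ c > 0, ∑ u ∈ i.support, i u * u l = c * (2 ^ m - 1))
    (hdig : ∀ j < m, ∑ u ∈ i.support, i u / 2 ^ j % 2 = 2) :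
    ∃ uu vv : Fin m → Fin n → ℕ, ∀ j : Fin m, i.digitSupport j = {uu j, vv j} ∧
      (∑ l, uu j l = n / 2) ∧ (∑ l, vv j l = n / 2) ∧ ∀ l, uu j l + vv j l = 1 := by
  obtain ⟨hcols, hweight⟩ := col_sums_eq_and_weight_eq_half heven hsupp hval hcol hdig
  have hpair (j : Fin m) : ∃ u v, u ≠ v ∧ i.digitSupport j = {u, v} := by
    rw [← card_eq_two, ← Finsupp.sum_digit]
    exact hdig j j.2
  choose uu vv hne hset using hpair
  have hmem (j : Fin m) : uu j ∈ i.support ∧ vv j ∈ i.support := by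
    constructor <;> apply Finsupp.digitSupport_subset_support (j := j) <;> simp [hset j]
  have hdigit_col (j : Fin m) (l : Fin n) :
      ∑ u ∈ i.support, i u / 2 ^ (j : ℕ) % 2 * u l = uu j l + vv j l := by
    rw [Finsupp.sum_digit_mul, hset j, sum_pair (hne j)]
  have hone : ∀ j < m, ∀ l, ∑ u ∈ i.support, i u / 2 ^ j % 2 * u l = 1 := by
    refine eq_one_of_sum_range_two_pow_mul_eq (fun l => ?_) (fun j hj => ?_)
    · rw [← sum_mul_eq_sum_range_two_pow_mul _ (fun u _ => hval u), hcols l]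
    · obtain ⟨k, rfl⟩ := heven
      simp only [hdigit_col ⟨j, hj⟩, sum_add_distrib, hweight _ (hmem _).1,
        hweight _ (hmem _).2, Fintype.card_fin]
      omega
  exact ⟨uu, vv, fun j => ⟨hset j, hweight _ (hmem j).1, hweight _ (hmem j).2,
    fun l => (hdigit_col j l).symm.trans (hone j j.2 l)⟩⟩

theorem conditions_of_digitSupport_eq_pair (hn : n ≠ 0) (hval : ∀ u, i u < 2 ^ m)
    {uu vv : Fin m → Fin n → ℕ}
    (h : ∀ j : Fin m, i.digitSupport j = {uu j, vv j} ∧ ∀ l, uu j l + vv j l = 1) :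
    (∀ l : Fin n, ∃ c > 0, ∑ u ∈ i.support, i u * u l = c * (2 ^ m - 1)) ∧
      ∀ j < m, ∑ u ∈ i.support, i u / 2 ^ j % 2 = 2 := by
  have hne (j : Fin m) : uu j ≠ vv j := fun heq => by
    have := (h j).2 ⟨0, Nat.pos_of_ne_zero hn⟩
    rw [heq] at this
    omega
  have hdigit_col (j : Fin m) (l : Fin n) : ∑ u ∈ i.support, i u / 2 ^ (j : ℕ) % 2 * u l = 1 := by
    rw [Finsupp.sum_digit_mul, (h j).1, sum_pair (hne j), (h j).2 l]
  refine ⟨fun l => ⟨1, one_pos, ?_⟩, fun j hj => ?_⟩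
  · rw [one_mul, sum_mul_eq_sum_range_two_pow_mul _ (fun u _ => hval u), ← Nat.sum_range_two_pow]
    exact sum_congr rfl fun j hj => by rw [hdigit_col ⟨j, mem_range.1 hj⟩ l, mul_one]
  · rw [Finsupp.sum_digit, (h ⟨j, hj⟩).1, card_pair (hne _)]

theorem conditions_iff_exists_digitSupport_eq_pair (hn : n ≠ 0) (heven : Even n)
    (hsupp : ∀ u ∈ i.support, ∑ l, u l ≤ n / 2) (hval : ∀ u, i u < 2 ^ m) :
    ((∀ l : Fin n, ∃ c > 0, ∑ u ∈ i.support, i u * u l = c * (2 ^ m - 1)) ∧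
      ∀ j < m, ∑ u ∈ i.support, i u / 2 ^ j % 2 = 2) ↔
    ∃ uu vv : Fin m → Fin n → ℕ, ∀ j : Fin m, i.digitSupport j = {uu j, vv j} ∧
      (∑ l, uu j l = n / 2) ∧ (∑ l, vv j l = n / 2) ∧ ∀ l, uu j l + vv j l = 1 :=
  ⟨fun ⟨hcol, hdig⟩ => exists_digitSupport_eq_pair heven hsupp hval hcol hdig,
    fun ⟨_, _, h⟩ => conditions_of_digitSupport_eq_pair hn hval fun j => ⟨(h j).1, (h j).2.2.2⟩⟩

end

theorem stmt9_general (m n : ℕ) (hn : 4 ≤ n) (heven : Even n)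
    (i : (Fin n → ℕ) →₀ ℕ)
    (hsupp : ∀ u ∈ i.support, ∑ l, u l ≤ n / 2)
    (hval : ∀ u, i u < 2 ^ m) :
    ((∀ l : Fin n, ∃ c > 0, ∑ u ∈ i.support, i u * u l = c * (2 ^ m - 1)) ∧
      ∀ j < m, ∑ u ∈ i.support, (i u / 2 ^ j % 2) = 2)
    ↔ ∃ uu vv : Fin m → (Fin n → ℕ),
        ∀ j : Fin m,
          (∀ l, uu j l ≤ 1) ∧ (∀ l, vv j l ≤ 1) ∧
          (∑ l, uu j l = n / 2) ∧ (∑ l, vv j l = n / 2) ∧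
          (∀ l, uu j l + vv j l = 1) ∧
          i (uu j) / 2 ^ (j : ℕ) % 2 = 1 ∧ i (vv j) / 2 ^ (j : ℕ) % 2 = 1 ∧
          ∀ u : Fin n → ℕ, (∑ l, u l ≤ n / 2) → u ≠ uu j → u ≠ vv j →
            i u / 2 ^ (j : ℕ) % 2 = 0 := by
  rw [conditions_iff_exists_digitSupport_eq_pair (by omega) heven hsupp hval]
  refine exists₂_congr fun uu vv => forall_congr' fun j => ?_
  rw [Finsupp.digitSupport_eq_pair_iff (p := fun u => ∑ l, u l ≤ n / 2) hsupp]
  constructor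
  · rintro ⟨⟨hu, hv, hzero⟩, hus, hvs, hone⟩
    exact ⟨fun l => by have := hone l; omega, fun l => by have := hone l; omega,
      hus, hvs, hone, hu, hv, hzero⟩
  · rintro ⟨-, -, hus, hvs, hone, hu, hv, hzero⟩
    exact ⟨⟨hu, hv, hzero⟩, hus, hvs, hone⟩

/-- Lemma 3.1: for `q = 2^m`, `n ≥ 4` even, `d = n/2`, a function
`i : U_{n/2} → {0,…,q-1}` satisfies (i) every component of `Σ_u i(u)·u` is a positive
multiple of `q-1` and (ii) `Σ_u i(u)^{(j)} = 2` for all `j < m`, iff there exist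
`u_j, v_j ∈ {0,1}^n` with `|u_j| = |v_j| = n/2`, `u_j + v_j = (1,…,1)`, such that for each
`j` the `j`-th digit of `i` is `1` exactly at `u_j` and `v_j` and `0` elsewhere on `U_{n/2}`. -/
theorem stmt9 (m n : ℕ) (hm : 0 < m) (hn : 4 ≤ n) (heven : Even n)
    (i : (Fin n → ℕ) →₀ ℕ)
    (hsupp : ∀ u ∈ i.support, ∑ l, u l ≤ n / 2)
    (hval : ∀ u, i u < 2 ^ m) :
    ((∀ l : Fin n, ∃ c > 0, ∑ u ∈ i.support, i u * u l = c * (2 ^ m - 1)) ∧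
      ∀ j < m, ∑ u ∈ i.support, (i u / 2 ^ j % 2) = 2)
    ↔ ∃ uu vv : Fin m → (Fin n → ℕ),
        ∀ j : Fin m,
          (∀ l, uu j l ≤ 1) ∧ (∀ l, vv j l ≤ 1) ∧
          (∑ l, uu j l = n / 2) ∧ (∑ l, vv j l = n / 2) ∧
          (∀ l, uu j l + vv j l = 1) ∧
          i (uu j) / 2 ^ (j : ℕ) % 2 = 1 ∧ i (vv j) / 2 ^ (j : ℕ) % 2 = 1 ∧
          ∀ u : Fin n → ℕ, (∑ l, u l ≤ n / 2) → u ≠ uu j → u ≠ vv j →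
            i u / 2 ^ (j : ℕ) % 2 = 0 :=
  stmt9_general m n hn heven i hsupp hval
end

section
/- Let n ≥ 4 and n/2 ≤ d ≤ n-2. The number of polynomials f ∈ F_2[X_1,...,X_n] with deg f ≤ d (and squarefree monomials, i.e., deg_{X_j} f ≤ 1) whose Hamming weight is divisible by 4 equals 2^{binom(n,0)+...+binom(n,d)-1} + 2^{2^{n-1}-1}. -/
/-!
Let `C = R(d, n)`, `N = 2^n` and `e = n - d - 1`. Since `d < n`, every `f ∈ C` has
`∑ₓ f(x) = 0`, so all weights in `C` are even and the number of `f ∈ C` with `4 ∣ |f|` is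
`(|C| + ∑_{f ∈ C} i^|f|) / 2`. Expanding `2 i^a = (1 + i) + (1 - i)(-1)^a` over the `N` points
gives the MacWilliams identity
`2^N ∑_{f ∈ C} i^|f| = |C| ∑_{g ∈ C^⊥} (1 - i)^|g| (1 + i)^(N - |g|)`.
The dual code contains `R(e, n)`, because `fg` has degree `< n` and hence sums to zero, and the
two have the same size, as `dim R(d, n) + dim R(e, n) = N`. Since `2e + 2 ≤ n`, weights in
`R(e, n)` are divisible by `4`: monomials of degree `k` have weight `2^(n - k)`, and
`|f + g| = |f| + |g| - 2|fg|` with `|fg|` even. So every term of the dual sum equals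
`(1 + i)^N = 2^(N/2)`, and `∑_{f ∈ C} i^|f| = 2^(N/2)`.
-/

open MvPolynomial Finset Complex

lemma ZMod.eq_zero_or_eq_one (a : ZMod 2) : a = 0 ∨ a = 1 := by
  revert a; decide

lemma ZMod.ne_zero_iff_iff_eq {a b : ZMod 2} : (a ≠ 0 ↔ b ≠ 0) ↔ a = b := by
  revert a b; decide

lemma Finsupp.card_support_le_sum {σ : Type*} (α : σ →₀ ℕ) :
    #α.support ≤ α.sum fun _ e => e := by
  classical
  exact (Finsupp.toFinset_toMultiset α ▸ Multiset.toFinset_card_le _).trans_eq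
    (Finsupp.card_toMultiset α)

lemma AddChar.map_sum_eq_prod {A M κ : Type*} [AddCommMonoid A] [CommMonoid M] (ψ : AddChar A M)
    (s : Finset κ) (f : κ → A) : ψ (∑ i ∈ s, f i) = ∏ i ∈ s, ψ (f i) := by
  classical
  induction s using Finset.induction_on with
  | empty => simp
  | insert i s hi ih => rw [sum_insert hi, prod_insert hi, AddChar.map_add_eq_mul, ih]

section MacWilliams

variable {ι : Type*} [Fintype ι]

noncomputable def signChar : AddChar (ZMod 2) ℂ :=
  AddChar.zmodChar 2 (by norm_num : (-1 : ℂ) ^ 2 = 1)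

@[simp] lemma signChar_zero : signChar 0 = 1 := AddChar.map_zero_eq_one _

@[simp] lemma signChar_one : signChar 1 = -1 := by
  simp [signChar, AddChar.zmodChar_apply, ZMod.val_one]

lemma signChar_eq_one_iff {a : ZMod 2} : signChar a = 1 ↔ a = 0 := by
  rcases ZMod.eq_zero_or_eq_one a with rfl | rfl <;> norm_num

lemma hammingNorm_eq_sum_val (c : ι → ZMod 2) : hammingNorm c = ∑ i, (c i).val := by
  rw [hammingNorm, card_filter]
  exact sum_congr rfl fun i _ => by generalize c i = a; fin_cases a <;> rfl

lemma natCast_hammingNorm (c : ι → ZMod 2) : (hammingNorm c : ZMod 2) = ∑ i, c i := by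
  simp [hammingNorm_eq_sum_val]

lemma hammingNorm_add_add_two_mul_hammingNorm_mul (c c' : ι → ZMod 2) :
    hammingNorm (c + c') + 2 * hammingNorm (c * c') = hammingNorm c + hammingNorm c' := by
  simp only [hammingNorm_eq_sum_val, mul_sum, ← sum_add_distrib, Pi.add_apply, Pi.mul_apply]
  exact sum_congr rfl fun i _ => by
    generalize c i = a; generalize c' i = b; revert a b; decide

lemma prod_one_add_signChar (c : ι → ZMod 2) :
    ∏ x, (1 + signChar (c x)) = if c = 0 then 2 ^ Fintype.card ι else 0 := by
  split_ifs with hc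
  · simp [hc, one_add_one_eq_two]
  · obtain ⟨x, hx⟩ := Function.ne_iff.mp hc
    refine prod_eq_zero (mem_univ x) ?_
    rw [(ZMod.eq_zero_or_eq_one (c x)).resolve_left hx, signChar_one, add_neg_cancel]

lemma two_pow_mul_I_pow_hammingNorm (c : ι → ZMod 2) :
    2 ^ Fintype.card ι * I ^ hammingNorm c = ∏ x, ((1 + I) + (1 - I) * signChar (c x)) := by
  rw [hammingNorm_eq_sum_val, ← prod_pow_eq_pow_sum, ← card_univ, ← prod_const, ← prod_mul_distrib]
  refine prod_congr rfl fun x _ => ?_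
  rcases ZMod.eq_zero_or_eq_one (c x) with h | h <;> simp [h, ZMod.val_one] <;> ring

variable {G : Type*} [AddCommGroup G] [Fintype G] (ev : G →+ ι → ZMod 2)

open scoped Classical in
/-- A word of the dual code of the image of `ev` is encoded by its support. -/
noncomputable def dualSets : Finset (Finset ι) := {S | ∀ g, ∑ x ∈ S, ev g x = 0}

lemma mem_dualSets {S : Finset ι} : S ∈ dualSets ev ↔ ∀ g, ∑ x ∈ S, ev g x = 0 := by
  simp [dualSets]

variable [DecidableEq ι]

lemma prod_add_mul_signChar (a b : ℂ) (c : ι → ZMod 2) :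
    ∏ x, (a + b * signChar (c x)) =
      ∑ S : Finset ι, b ^ #S * a ^ (Fintype.card ι - #S) * signChar (∑ x ∈ S, c x) := by
  simp_rw [add_comm a, Fintype.prod_add, prod_mul_distrib, prod_const, card_compl,
    AddChar.map_sum_eq_prod]
  exact sum_congr rfl fun S _ => by ring

lemma sum_signChar_sum_eq_ite (S : Finset ι) :
    ∑ g, signChar (∑ x ∈ S, ev g x) = if S ∈ dualSets ev then (Fintype.card G : ℂ) else 0 := by
  classical
  let φ : G →+ ZMod 2 := ∑ x ∈ S, (Pi.evalAddMonoidHom (fun _ => ZMod 2) x).comp ev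
  have hφ : ∀ g, φ g = ∑ x ∈ S, ev g x := by simp [φ]
  have := AddChar.sum_eq_ite (signChar.compAddMonoidHom φ)
  simp only [AddChar.compAddMonoidHom_apply, hφ] at this
  rw [this]
  simp [AddChar.eq_zero_iff, signChar_eq_one_iff, hφ, mem_dualSets]

/-- The MacWilliams identity `W_C(a + b, a - b) = |C| W_{C^⊥}(a, b)` for the weight enumerator
`W(x, y) = ∑_c x^(N - |c|) y^|c|`. -/
lemma sum_prod_add_mul_signChar (a b : ℂ) :
    ∑ g, ∏ x, (a + b * signChar (ev g x)) =
      Fintype.card G * ∑ S ∈ dualSets ev, b ^ #S * a ^ (Fintype.card ι - #S) := by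
  simp_rw [prod_add_mul_signChar, sum_comm (γ := G), ← mul_sum, sum_signChar_sum_eq_ite, mul_ite,
    mul_zero, sum_ite_mem, univ_inter, mul_sum, mul_comm]

lemma card_mul_card_dualSets (hev : Function.Injective ev) :
    Fintype.card G * #(dualSets ev) = 2 ^ Fintype.card ι := by
  have key := sum_prod_add_mul_signChar ev 1 1
  simp only [one_mul, one_pow, mul_one, sum_const, nsmul_eq_mul, prod_one_add_signChar] at key
  rw [sum_ite, sum_const_zero, add_zero, sum_const, nsmul_eq_mul] at key
  have hzero : ({g | ev g = 0} : Finset G) = {0} := by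
    ext g
    simp only [mem_filter, mem_univ, true_and, mem_singleton]
    exact ⟨fun h => hev (h.trans (map_zero ev).symm), fun h => h ▸ map_zero ev⟩
  rw [hzero, card_singleton, Nat.cast_one, one_mul] at key
  exact_mod_cast key.symm

lemma sum_I_pow_hammingNorm (hev : Function.Injective ev)
    (hdual : ∀ S ∈ dualSets ev, 4 ∣ #S) :
    ∑ g, I ^ hammingNorm (ev g) = (1 + I) ^ Fintype.card ι := by
  have key := sum_prod_add_mul_signChar ev (1 + I) (1 - I)
  simp_rw [← two_pow_mul_I_pow_hammingNorm, ← mul_sum] at key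
  have hterm : ∀ S ∈ dualSets ev,
      (1 - I) ^ #S * (1 + I) ^ (Fintype.card ι - #S) = (1 + I) ^ Fintype.card ι := by
    intro S hS
    obtain ⟨k, hk⟩ := hdual S hS
    have h1 : 1 - I = -I * (1 + I) := by ring_nf; rw [I_sq]; ring
    have h2 : (-I) ^ 4 = 1 := by rw [neg_pow, I_pow_four]; norm_num
    rw [h1, mul_pow, hk, pow_mul, h2, one_pow, one_mul, ← pow_add,
      Nat.add_sub_cancel' (hk ▸ card_le_univ S)]
  rw [sum_congr rfl hterm, sum_const, nsmul_eq_mul, ← mul_assoc] at key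
  refine mul_left_cancel₀ (pow_ne_zero _ two_ne_zero) (key.trans ?_)
  rw [← Nat.cast_mul, card_mul_card_dualSets ev hev]
  push_cast; rfl

end MacWilliams

lemma one_add_I_pow_two_pow {n : ℕ} (hn : 3 ≤ n) : (1 + I) ^ 2 ^ n = 2 ^ 2 ^ (n - 1) := by
  obtain ⟨k, rfl⟩ := Nat.exists_eq_add_of_le' hn
  have h2 : (1 + I) ^ 2 = 2 * I := by ring_nf; rw [I_sq]; ring
  rw [show k + 3 - 1 = k + 2 by omega, pow_succ, pow_mul', h2, mul_pow,
    show 2 ^ (k + 2) = 4 * 2 ^ k by ring, pow_mul I, I_pow_four, one_pow, mul_one]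

lemma two_mul_card_filter_four_dvd {α : Type*} [Fintype α] (w : α → ℕ) (hw : ∀ a, 2 ∣ w a)
    {m : ℕ} (h : ∑ a, I ^ w a = m) : 2 * #{a | 4 ∣ w a} = Fintype.card α + m := by
  have hI (a : α) : I ^ w a = if 4 ∣ w a then 1 else -1 := by
    obtain ⟨k, hk⟩ := hw a
    rw [hk, pow_mul, I_sq]
    split_ifs with h4
    · exact Even.neg_one_pow (Nat.even_iff.mpr (by omega))
    · exact Odd.neg_one_pow (Nat.odd_iff.mpr (by omega))
  simp only [hI, sum_ite, sum_const, nsmul_eq_mul, mul_one, mul_neg] at h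
  have hsplit := card_filter_add_card_filter_not (s := univ) (fun a => 4 ∣ w a)
  rw [card_univ] at hsplit
  have : (2 * #{a | 4 ∣ w a} : ℂ) = Fintype.card α + m := by
    rw [← hsplit]; push_cast; linear_combination h
  exact_mod_cast this

section Weight

variable {σ : Type*} [Fintype σ] [DecidableEq σ]

noncomputable def weight (f : MvPolynomial σ (ZMod 2)) : ℕ := hammingNorm fun x => eval x f

@[simp] lemma weight_zero : weight (0 : MvPolynomial σ (ZMod 2)) = 0 := by
  simp [weight, ← Pi.zero_def]

lemma weight_add_add_two_mul_weight_mul (f g : MvPolynomial σ (ZMod 2)) :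
    weight (f + g) + 2 * weight (f * g) = weight f + weight g := by
  simpa [weight, Pi.add_def, Pi.mul_def] using
    hammingNorm_add_add_two_mul_hammingNorm_mul (fun x => eval x f) (fun x => eval x g)

lemma weight_monomial_one (α : σ →₀ ℕ) :
    weight (monomial α (1 : ZMod 2)) = 2 ^ (Fintype.card σ - #α.support) := by
  have hsupp : ({x | eval x (monomial α (1 : ZMod 2)) ≠ 0} : Finset (σ → ZMod 2)) =
      Fintype.piFinset fun i => if i ∈ α.support then {1} else univ := by
    ext x
    simp only [mem_filter, mem_univ, true_and, Fintype.mem_piFinset, eval_monomial, one_mul,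
      Finsupp.prod, prod_ne_zero_iff]
    refine forall_congr' fun i => ?_
    split_ifs with hi
    · rw [pow_ne_zero_iff (Finsupp.mem_support_iff.mp hi), mem_singleton]
      rcases ZMod.eq_zero_or_eq_one (x i) with h | h <;> simp [h, Finsupp.mem_support_iff.mp hi]
    · simp [hi]
  rw [weight, hammingNorm, hsupp, Fintype.card_piFinset]
  simp only [apply_ite card, card_singleton, card_univ, ZMod.card, prod_ite, prod_const_one,
    prod_const, one_mul]
  rw [← card_compl]
  congr 2
  ext; simp

lemma two_dvd_weight {f : MvPolynomial σ (ZMod 2)}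
    (h : f.totalDegree < Fintype.card σ) : 2 ∣ weight f := by
  rw [← ZMod.natCast_eq_zero_iff, weight, natCast_hammingNorm]
  exact sum_eval_eq_zero f (by simpa [ZMod.card] using h)

lemma four_dvd_weight_monomial (α : σ →₀ ℕ) (c : ZMod 2) (h : #α.support + 2 ≤ Fintype.card σ) :
    4 ∣ weight (monomial α c) := by
  rcases ZMod.eq_zero_or_eq_one c with rfl | rfl
  · simp
  · rw [weight_monomial_one, show 4 = 2 ^ 2 by rfl]
    exact pow_dvd_pow 2 (by omega)

lemma four_dvd_weight_sum_monomial {D : ℕ} (hD : 2 * D + 2 ≤ Fintype.card σ)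
    (t : Finset (σ →₀ ℕ)) (c : (σ →₀ ℕ) → ZMod 2) (ht : ∀ α ∈ t, (α.sum fun _ e => e) ≤ D) :
    4 ∣ weight (∑ α ∈ t, monomial α (c α)) := by
  induction t using Finset.induction_on with
  | empty => simp
  | insert α t hα ih =>
    rw [sum_insert hα]
    have hαD := ht α (mem_insert_self α t)
    have htD : ∀ β ∈ t, (β.sum fun _ e => e) ≤ D := fun β hβ => ht β (mem_insert_of_mem hβ)
    have hmono : (monomial α (c α)).totalDegree ≤ D := (totalDegree_monomial_le _ _).trans hαD
    have hrest : (∑ β ∈ t, monomial β (c β)).totalDegree ≤ D :=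
      (totalDegree_finsetSum _ _).trans <| Finset.sup_le fun β hβ =>
        (totalDegree_monomial_le _ _).trans (htD β hβ)
    have hprod := two_dvd_weight ((totalDegree_mul _ _).trans_lt (by omega :
      (monomial α (c α)).totalDegree + (∑ β ∈ t, monomial β (c β)).totalDegree < _))
    have hm := four_dvd_weight_monomial α (c α) (by have := α.card_support_le_sum; omega)
    have := weight_add_add_two_mul_weight_mul (monomial α (c α)) (∑ β ∈ t, monomial β (c β))
    have := ih htD
    omega

lemma four_dvd_weight {f : MvPolynomial σ (ZMod 2)} (h : 2 * f.totalDegree + 2 ≤ Fintype.card σ) :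
    4 ∣ weight f := by
  rw [as_sum f]
  exact four_dvd_weight_sum_monomial h _ _ fun α hα => le_totalDegree hα

lemma natCard_eval_ne_zero (f : MvPolynomial σ (ZMod 2)) :
    Nat.card {x : σ → ZMod 2 // eval x f ≠ 0} = weight f := by
  rw [Nat.card_eq_fintype_card, Fintype.card_subtype]
  rfl

lemma sum_eval_filter_ne_zero (f h : MvPolynomial σ (ZMod 2)) :
    ∑ x ∈ {x | eval x h ≠ 0}, eval x f = ∑ x, eval x (f * h) := by
  rw [sum_filter]
  refine sum_congr rfl fun x _ => ?_
  rw [eval_mul]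
  generalize eval x f = a
  generalize eval x h = b
  revert a b
  decide

end Weight

section ReedMuller

variable (σ : Type)

noncomputable def reedMuller (d : ℕ) : Submodule (ZMod 2) (MvPolynomial σ (ZMod 2)) :=
  restrictTotalDegree σ (ZMod 2) d ⊓ restrictDegree σ (ZMod 2) 1

variable {σ} {d : ℕ}

lemma mem_reedMuller {f : MvPolynomial σ (ZMod 2)} :
    f ∈ reedMuller σ d ↔ f.totalDegree ≤ d ∧ ∀ i, f.degreeOf i ≤ 1 := by
  simp only [reedMuller, Submodule.mem_inf, mem_restrictTotalDegree, mem_restrictDegree,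
    degreeOf_le_iff]
  exact and_congr_right' ⟨fun h i s hs => h s hs i, fun h s hs i => h i s hs⟩

lemma reedMuller_eq_restrictSupport :
    reedMuller σ d = restrictSupport (ZMod 2)
      ({α | (α.sum fun _ e => e) ≤ d} ∩ {α | ∀ i, α i ≤ 1}) := by
  ext f
  simp only [reedMuller, restrictTotalDegree, restrictDegree, Submodule.mem_inf,
    mem_restrictSupport_iff, Set.subset_inter_iff]

lemma reedMuller_exponents_eq_image [DecidableEq σ] :
    {α : σ →₀ ℕ | (α.sum fun _ e => e) ≤ d} ∩ {α | ∀ i, α i ≤ 1} =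
      (fun s : Finset σ => Multiset.toFinsupp s.val) '' {s | #s ≤ d} := by
  ext α
  simp only [Set.mem_inter_iff, Set.mem_ofPred_eq, Set.mem_image]
  constructor
  · rintro ⟨hdeg, hα⟩
    have hnodup : (Finsupp.toMultiset α).Nodup := Multiset.nodup_iff_count_le_one.mpr fun i => by
      rw [Finsupp.count_toMultiset]; exact hα i
    refine ⟨⟨_, hnodup⟩, ?_, Finsupp.toMultiset_toFinsupp α⟩
    rw [card_mk, Finsupp.card_toMultiset]; exact hdeg
  · rintro ⟨s, hs, rfl⟩
    refine ⟨?_, fun i => ?_⟩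
    · change (Multiset.toFinsupp s.val).sum (fun _ => id) ≤ d
      rw [← Finsupp.card_toMultiset, Multiset.toFinsupp_toMultiset]; exact hs
    · rw [Multiset.toFinsupp_apply, Multiset.count_eq_of_nodup s.nodup]; split_ifs <;> omega

variable (σ d) [Fintype σ]

noncomputable def reedMullerEval : reedMuller σ d →+ (σ → ZMod 2) → ZMod 2 :=
  ((evalₗ (ZMod 2) σ).comp (reedMuller σ d).subtype).toAddMonoidHom

variable {σ d}

lemma reedMullerEval_injective : Function.Injective (reedMullerEval σ d) := by
  refine (injective_iff_map_eq_zero _).mpr fun f hf => Subtype.ext ?_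
  refine eq_zero_of_eval_eq_zero σ (ZMod 2) f (congrFun hf) ?_
  rw [ZMod.card]
  exact (Submodule.mem_inf.mp f.2).2

lemma card_filter_card_le :
    #{s : Finset σ | #s ≤ d} = ∑ j ∈ range (d + 1), (Fintype.card σ).choose j := by
  rw [card_eq_sum_card_fiberwise (f := fun s : Finset σ => #s) (t := range (d + 1))]
  · refine sum_congr rfl fun j hj => ?_
    rw [filter_filter, ← Fintype.card_finset_len, Fintype.card_subtype]
    congr 1
    ext s
    simp only [mem_filter, mem_univ, true_and, and_iff_right_iff_imp]
    rw [mem_range] at hj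
    omega
  · intro s hs
    simp only [coe_filter, mem_univ, true_and, Set.mem_ofPred_eq] at hs
    simp only [coe_range, Set.mem_Iio]
    omega

variable [DecidableEq σ]

noncomputable instance : Fintype (reedMuller σ d) :=
  Fintype.ofInjective _ reedMullerEval_injective

lemma card_reedMuller : Fintype.card (reedMuller σ d) = 2 ^ #{s : Finset σ | #s ≤ d} := by
  have b := (basisRestrictSupport (ZMod 2) _).map
    (LinearEquiv.ofEq _ _ (reedMuller_eq_restrictSupport (σ := σ) (d := d)).symm)
  rw [Fintype.card_eq_nat_card, Module.natCard_eq_pow_finrank (K := ZMod 2),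
    Module.finrank_eq_nat_card_basis b, reedMuller_exponents_eq_image,
    Nat.card_image_of_injective, Nat.card_zmod]
  · rw [Set.coe_ofPred, Nat.card_eq_fintype_card, Fintype.card_subtype]
  · exact Multiset.toFinsupp.injective.comp Finset.val_injective

lemma card_filter_card_le_add_card_filter_card_le {d e : ℕ} (h : d + e + 1 = Fintype.card σ) :
    #{s : Finset σ | #s ≤ d} + #{s : Finset σ | #s ≤ e} = 2 ^ Fintype.card σ := by
  have : #{s : Finset σ | #s ≤ e} = #{s : Finset σ | ¬ #s ≤ d} := by
    refine card_nbij' compl compl (fun s hs => ?_) (fun s hs => ?_)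
      (fun s _ => compl_compl s) (fun s _ => compl_compl s) <;>
    · simp only [coe_filter, mem_univ, true_and, Set.mem_ofPred_eq, card_compl] at hs ⊢
      omega
  rw [this, card_filter_add_card_filter_not, card_univ, Fintype.card_finset]

lemma card_reedMuller_mul_card_reedMuller {d e : ℕ} (h : d + e + 1 = Fintype.card σ) :
    Fintype.card (reedMuller σ d) * Fintype.card (reedMuller σ e) = 2 ^ 2 ^ Fintype.card σ := by
  rw [card_reedMuller, card_reedMuller, ← pow_add, card_filter_card_le_add_card_filter_card_le h]

lemma four_dvd_card_of_mem_dualSets {d e : ℕ} (hde : d + e + 1 = Fintype.card σ)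
    (he : 2 * e + 2 ≤ Fintype.card σ) (S : Finset (σ → ZMod 2))
    (hS : S ∈ dualSets (reedMullerEval σ d)) : 4 ∣ #S := by
  have hsupp (h : reedMuller σ e) :
      ({x | eval x h.1 ≠ 0} : Finset _) ∈ dualSets (reedMullerEval σ d) := by
    refine (mem_dualSets _).mpr fun g => (sum_eval_filter_ne_zero g.1 h.1).trans ?_
    refine sum_eval_eq_zero _ ((totalDegree_mul _ _).trans_lt ?_)
    have := (mem_reedMuller.mp g.2).1
    have := (mem_reedMuller.mp h.2).1
    simp only [ZMod.card]
    omega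
  let supp : reedMuller σ e → dualSets (reedMullerEval σ d) := fun h => ⟨_, hsupp h⟩
  have hinj : Function.Injective supp := by
    intro h h' hsupp_eq
    refine reedMullerEval_injective (funext fun x => ?_)
    have := congrArg (x ∈ ·.1) hsupp_eq
    simp only [supp, mem_filter, mem_univ, true_and, eq_iff_iff] at this
    exact (ZMod.ne_zero_iff_iff_eq).mp this
  have hcard : Fintype.card (reedMuller σ e) = Fintype.card (dualSets (reedMullerEval σ d)) := by
    have h1 := card_mul_card_dualSets _ (reedMullerEval_injective (σ := σ) (d := d))
    rw [Fintype.card_fun, ZMod.card, ← card_reedMuller_mul_card_reedMuller hde] at h1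
    rw [Fintype.card_coe]
    exact (Nat.eq_of_mul_eq_mul_left Fintype.card_pos h1).symm
  obtain ⟨h, hh⟩ := ((Fintype.bijective_iff_injective_and_card supp).mpr ⟨hinj, hcard⟩).2 ⟨S, hS⟩
  rw [← show _ = S from congrArg Subtype.val hh]
  exact four_dvd_weight (f := h.1) (by have := (mem_reedMuller.mp h.2).1; omega)

lemma sum_I_pow_weight (hn : 3 ≤ Fintype.card σ) (hd : Fintype.card σ ≤ 2 * d) (hd' : d < Fintype.card σ) :
    ∑ f : reedMuller σ d, I ^ weight f.1 = 2 ^ 2 ^ (Fintype.card σ - 1) := by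
  have := sum_I_pow_hammingNorm _ reedMullerEval_injective
    (four_dvd_card_of_mem_dualSets (σ := σ) (d := d) (e := Fintype.card σ - d - 1) (by omega)
      (by omega))
  rwa [Fintype.card_fun, ZMod.card, one_add_I_pow_two_pow hn] at this

lemma natCard_four_dvd_eq_card_filter_reedMuller :
    Nat.card {f : MvPolynomial σ (ZMod 2) //
        f.totalDegree ≤ d ∧ (∀ j, f.degreeOf j ≤ 1) ∧
        4 ∣ Nat.card {x : σ → ZMod 2 // eval x f ≠ 0}} =
      #{f : reedMuller σ d | 4 ∣ weight f.1} := by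
  rw [← Fintype.card_subtype, ← Nat.card_eq_fintype_card]
  refine Nat.card_congr ((Equiv.subtypeEquivRight fun f => ?_).trans
    (Equiv.subtypeSubtypeEquivSubtypeInter (· ∈ reedMuller σ d) (4 ∣ weight ·)).symm)
  rw [mem_reedMuller, natCard_eval_ne_zero, and_assoc]

lemma two_mul_card_four_dvd_weight (hn : 3 ≤ Fintype.card σ) (hd : Fintype.card σ ≤ 2 * d) (hd' : d < Fintype.card σ) :
    2 * #{f : reedMuller σ d | 4 ∣ weight f.1} =
      2 ^ #{s : Finset σ | #s ≤ d} + 2 ^ 2 ^ (Fintype.card σ - 1) := by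
  rw [← card_reedMuller]
  refine two_mul_card_filter_four_dvd _ (fun f => two_dvd_weight ?_) ?_
  · have := (mem_reedMuller.mp f.2).1
    omega
  · push_cast
    exact sum_I_pow_weight hn hd hd'

end ReedMuller

/-- Corollary 3.9: for `n ≥ 4` and `n/2 ≤ d ≤ n - 2`, the number of codewords of the binary
Reed–Muller code `R_2(d, n)` with weight divisible by `4` is
`2^(binom(n,0)+⋯+binom(n,d)-1) + 2^(2^(n-1)-1)`. -/
theorem stmt12 (n d : ℕ) (hn : 4 ≤ n) (hd1 : n ≤ 2 * d) (hd2 : d ≤ n - 2) :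
    Nat.card {f : MvPolynomial (Fin n) (ZMod 2) //
        f.totalDegree ≤ d ∧ (∀ j, f.degreeOf j ≤ 1) ∧
        4 ∣ Nat.card {x : Fin n → ZMod 2 // eval x f ≠ 0}} =
      2 ^ (∑ j ∈ Finset.range (d + 1), n.choose j - 1) + 2 ^ (2 ^ (n - 1) - 1) := by
  have h := two_mul_card_four_dvd_weight (σ := Fin n) (d := d)
    (by rw [Fintype.card_fin]; omega) (by rwa [Fintype.card_fin]) (by rw [Fintype.card_fin]; omega)
  rw [card_filter_card_le, Fintype.card_fin, sum_range_succ', Nat.choose_zero_right] at h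
  rw [natCard_four_dvd_eq_card_filter_reedMuller, sum_range_succ', Nat.choose_zero_right,
    Nat.add_sub_cancel]
  obtain ⟨m, hm⟩ : ∃ m, 2 ^ (n - 1) = m + 1 := ⟨_, (Nat.succ_pred_eq_of_pos (by positivity)).symm⟩
  rw [hm, pow_succ, pow_succ] at h
  rw [hm, Nat.add_sub_cancel]
  omega
end

section
/- Let q = 2, n ≥ 4, n/2 ≤ d ≤ n-2, and f = Σ_{u ∈ U_d ∩ {0,1}^n} a_u X^u a multilinear polynomial over F_2 of degree ≤ d. Then |Z(f)| ≡ 0 (mod 4) if and only if Σ_{{u,v}} a_u a_v = 0 in F_2, where the sum runs over unordered pairs {u,v} with u, v ∈ {0,1}^n, |u|, |v| ∈ [n-d, d], and u + v ≥ (1,...,1) componentwise. -/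
/-!
Lift values from `ZMod 2` to their representatives `0, 1` in `ZMod 4`. Since `4 ∣ 2 ^ n`, the
condition `4 ∣ |Z(f)|` says that the number of non-zeros of `f`, i.e. `∑ₓ lift (f x)`, vanishes
in `ZMod 4`. Writing `f = ∑_S a_S x^S` over squarefree monomials and `B = ∑_S lift a_S lift x^S`,
one has `lift (f x) = 2B - B²`. Summed over `x`, a monomial `x^S` contributes `2 ^ (n - |S|)`
and a product `x^S x^T = x^(S ∪ T)` contributes `2 ^ (n - |S ∪ T|)`. As `deg f ≤ n - 2`,
everything vanishes mod 4 except the products of two distinct monomials with `S ∪ T` everything;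
each unordered pair appears twice, so `∑ₓ lift (f x) = -2 ∑_{{S,T}} lift (a_S a_T)`, which is
zero iff `∑_{{S,T}} a_S a_T = 0` in `ZMod 2`.
-/

open MvPolynomial Finset

def lift4 : ZMod 2 →*₀ ZMod 4 where
  toFun a := a.val
  map_zero' := rfl
  map_one' := rfl
  map_mul' := by decide

def mod2 : ZMod 4 →+* ZMod 2 := ZMod.castHom (by norm_num) _

lemma mod2_lift4 (a : ZMod 2) : mod2 (lift4 a) = a := by revert a; decide

-- `2b - b²` is `0` on even `b` and `1` on odd `b`.
lemma lift4_mod2 (b : ZMod 4) : lift4 (mod2 b) = 2 * b - b ^ 2 := by revert b; decide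

lemma two_mul_eq_zero_iff_mod2_eq_zero (b : ZMod 4) : 2 * b = 0 ↔ mod2 b = 0 := by
  revert b; decide

lemma mod2_sum_lift4 {ι : Type*} (s : Finset ι) (t : ι → ZMod 2) :
    mod2 (∑ i ∈ s, lift4 (t i)) = ∑ i ∈ s, t i := by
  simp only [map_sum, mod2_lift4]

lemma lift4_sum {ι : Type*} (s : Finset ι) (t : ι → ZMod 2) :
    lift4 (∑ i ∈ s, t i) = 2 * ∑ i ∈ s, lift4 (t i) - (∑ i ∈ s, lift4 (t i)) ^ 2 := by
  rw [← mod2_sum_lift4, lift4_mod2]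

lemma two_mul_sum_lift4_eq_zero_iff {ι : Type*} (s : Finset ι) (t : ι → ZMod 2) :
    2 * ∑ i ∈ s, lift4 (t i) = 0 ↔ ∑ i ∈ s, t i = 0 := by
  rw [two_mul_eq_zero_iff_mod2_eq_zero, mod2_sum_lift4]

lemma two_pow_eq_zero_zmod4 {k : ℕ} (hk : 2 ≤ k) : (2 : ZMod 4) ^ k = 0 := by
  obtain ⟨m, rfl⟩ := Nat.exists_eq_add_of_le hk
  rw [pow_add, show (2 : ZMod 4) ^ 2 = 0 by decide, zero_mul]

lemma four_dvd_card_zeros_iff {α : Type*} [Fintype α] (h4 : 4 ∣ Fintype.card α)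
    (g : α → ZMod 2) : 4 ∣ Nat.card {x // g x = 0} ↔ ∑ x, lift4 (g x) = 0 := by
  classical
  have hsplit : ∀ a : ZMod 2, (if a = 0 then 1 else 0) + lift4 a = 1 := by decide
  have hcard : (Nat.card {x // g x = 0} : ZMod 4) + ∑ x, lift4 (g x) = Fintype.card α := by
    rw [Nat.card_eq_fintype_card, Fintype.card_subtype, natCast_card_filter, ← sum_add_distrib,
      sum_congr rfl fun x _ => hsplit (g x), sum_const, card_univ, nsmul_one]
  rw [(ZMod.natCast_eq_zero_iff _ 4).mpr h4] at hcard
  rw [← ZMod.natCast_eq_zero_iff, eq_neg_of_add_eq_zero_left hcard, neg_eq_zero]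

lemma sum_lift4_prod_mul_prod {σ : Type*} [Fintype σ] [DecidableEq σ] (S T : Finset σ) :
    ∑ x : σ → ZMod 2, lift4 (∏ j ∈ S, x j) * lift4 (∏ j ∈ T, x j) = 2 ^ (S ∪ T)ᶜ.card := by
  have hfactor : ∀ j, ∑ a : ZMod 2, (if j ∈ S then lift4 a else 1) * (if j ∈ T then lift4 a else 1)
      = if j ∈ (S ∪ T)ᶜ then 2 else 1 := by
    intro j
    by_cases hS : j ∈ S <;> by_cases hT : j ∈ T <;> simp [hS, hT] <;> decide
  have hpoint : ∀ x : σ → ZMod 2, lift4 (∏ j ∈ S, x j) * lift4 (∏ j ∈ T, x j) =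
      ∏ j, (if j ∈ S then lift4 (x j) else 1) * (if j ∈ T then lift4 (x j) else 1) := fun x => by
    rw [prod_mul_distrib, Fintype.prod_ite_mem, Fintype.prod_ite_mem, map_prod, map_prod]
  rw [Fintype.sum_congr _ _ hpoint, ← Fintype.prod_sum fun j (a : ZMod 2) =>
      (if j ∈ S then lift4 a else 1) * (if j ∈ T then lift4 a else 1),
    Fintype.prod_congr _ _ hfactor, Fintype.prod_ite_mem, prod_const]

lemma sum_sum_eq_sum_diag_add_two_nsmul {ι β M : Type*} [DecidableEq ι] [LinearOrder β]
    [AddCommMonoid M] (s : Finset ι) {key : ι → β} (hkey : Function.Injective key)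
    {g : ι → ι → M} (hg : ∀ i j, g i j = g j i) :
    ∑ i ∈ s, ∑ j ∈ s, g i j =
      ∑ i ∈ s, g i i + 2 • ∑ p ∈ (s ×ˢ s).filter (fun p => key p.1 < key p.2), g p.1 p.2 := by
  have hswap : ∑ p ∈ (s ×ˢ s).filter (fun p => key p.2 < key p.1), g p.1 p.2 =
      ∑ p ∈ (s ×ˢ s).filter (fun p => key p.1 < key p.2), g p.1 p.2 :=
    sum_nbij' Prod.swap Prod.swap (by simp +contextual) (by simp +contextual) (by simp)
      (by simp) (fun p _ => hg p.1 p.2)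
  have hdiag : ∑ p ∈ (s ×ˢ s).filter (fun p => key p.1 = key p.2), g p.1 p.2 =
      ∑ i ∈ s, g i i := by
    simp only [hkey.eq_iff, ← diag_eq_filter, sum_diag]
  have hnot_lt : ∑ p ∈ (s ×ˢ s).filter (fun p => ¬ key p.1 < key p.2), g p.1 p.2 =
      ∑ i ∈ s, g i i + ∑ p ∈ (s ×ˢ s).filter (fun p => key p.1 < key p.2), g p.1 p.2 := by
    rw [← sum_filter_add_sum_filter_not (filter _ _) (fun p => key p.1 = key p.2), filter_filter,
      filter_filter, filter_congr fun p _ => and_iff_right_of_imp Eq.not_lt,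
      hdiag, ← hswap]
    congr 2
    exact filter_congr fun p _ => by
      rw [not_lt, ← ne_eq, ne_comm, lt_iff_le_and_ne]
  rw [← sum_product' s s g, ← sum_filter_add_sum_filter_not _ (fun p => key p.1 < key p.2),
    hnot_lt, two_nsmul]
  abel

lemma sum_single_one_apply {σ : Type*} [DecidableEq σ] (S : Finset σ) (j : σ) :
    (∑ i ∈ S, Finsupp.single i 1 : σ →₀ ℕ) j = if j ∈ S then 1 else 0 := by
  simp [Finsupp.finsetSum_apply, Finsupp.single_apply]

lemma support_sum_single_one {σ : Type*} [DecidableEq σ] (S : Finset σ) :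
    (∑ i ∈ S, Finsupp.single i 1 : σ →₀ ℕ).support = S := by
  ext j; simp [sum_single_one_apply]

lemma sum_single_one_support_eq {σ : Type*} [DecidableEq σ] {m : σ →₀ ℕ} (hm : ∀ j, m j ≤ 1) :
    ∑ i ∈ m.support, Finsupp.single i 1 = m := by
  ext j
  have := hm j
  rw [sum_single_one_apply]
  split_ifs with hj <;> simp only [Finsupp.mem_support_iff] at hj <;> omega

lemma card_le_totalDegree_of_coeff_ne_zero {σ R : Type*} [DecidableEq σ] [CommSemiring R]
    {f : MvPolynomial σ R} {S : Finset σ} (h : coeff (∑ i ∈ S, Finsupp.single i 1) f ≠ 0) :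
    S.card ≤ f.totalDegree := by
  have := le_totalDegree (mem_support_iff.mpr h)
  change Finsupp.degree _ ≤ _ at this
  simpa using this

lemma eval_eq_sum_prod_of_degreeOf_le_one {σ R : Type*} [Fintype σ] [DecidableEq σ]
    [CommSemiring R] {f : MvPolynomial σ R} (hf : ∀ j, f.degreeOf j ≤ 1) (x : σ → R) :
    eval x f = ∑ S : Finset σ, coeff (∑ i ∈ S, Finsupp.single i 1) f * ∏ j ∈ S, x j := by
  set e : Finset σ → σ →₀ ℕ := fun S => ∑ i ∈ S, Finsupp.single i 1
  have he : Function.Injective e := fun S T h => by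
    rw [← support_sum_single_one S, ← support_sum_single_one T]
    exact congrArg Finsupp.support h
  have hsupp : f.support ⊆ univ.image e := fun m hm =>
    mem_image.mpr ⟨m.support, mem_univ _,
      sum_single_one_support_eq fun j => (monomial_le_degreeOf j hm).trans (hf j)⟩
  have hprod : ∀ S, ∏ j, x j ^ e S j = ∏ j ∈ S, x j := fun S => by
    simp only [e, sum_single_one_apply, pow_ite, pow_one, pow_zero, Fintype.prod_ite_mem]
  calc eval x f = ∑ m ∈ f.support, coeff m f * ∏ j, x j ^ m j := eval_eq' x f
    _ = ∑ m ∈ univ.image e, coeff m f * ∏ j, x j ^ m j :=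
      sum_subset hsupp fun m _ hm => by rw [notMem_support_iff.mp hm, zero_mul]
    _ = _ := by rw [sum_image he.injOn]; simp only [hprod, e]

lemma sum_lift4_eval_eq {σ : Type*} [Fintype σ] [DecidableEq σ] (a : Finset σ → ZMod 2) :
    ∑ x : σ → ZMod 2, lift4 (∑ S, a S * ∏ j ∈ S, x j) =
      2 * ∑ S, lift4 (a S) * 2 ^ Sᶜ.card -
        ∑ S, ∑ T, lift4 (a S * a T) * 2 ^ (S ∪ T)ᶜ.card := by
  have hpoint : ∀ x : σ → ZMod 2, lift4 (∑ S, a S * ∏ j ∈ S, x j) =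
      2 * ∑ S, lift4 (a S) * lift4 (∏ j ∈ S, x j) -
        ∑ S, ∑ T, lift4 (a S * a T) * (lift4 (∏ j ∈ S, x j) * lift4 (∏ j ∈ T, x j)) := by
    intro x
    simp only [lift4_sum, sq, sum_mul_sum, map_mul, mul_mul_mul_comm]
  have hlinear : ∑ x : σ → ZMod 2, ∑ S, lift4 (a S) * lift4 (∏ j ∈ S, x j) =
      ∑ S, lift4 (a S) * 2 ^ Sᶜ.card := by
    rw [sum_comm]
    refine sum_congr rfl fun S _ => ?_
    rw [← mul_sum]
    simpa using congrArg (lift4 (a S) * ·) (sum_lift4_prod_mul_prod S ∅)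
  have hquadratic : ∑ x : σ → ZMod 2,
      ∑ S, ∑ T, lift4 (a S * a T) * (lift4 (∏ j ∈ S, x j) * lift4 (∏ j ∈ T, x j)) =
        ∑ S, ∑ T, lift4 (a S * a T) * 2 ^ (S ∪ T)ᶜ.card := by
    rw [sum_comm]
    refine sum_congr rfl fun S _ => ?_
    rw [sum_comm]
    simp only [← mul_sum, sum_lift4_prod_mul_prod]
  rw [Fintype.sum_congr _ _ hpoint, sum_sub_distrib, ← mul_sum, hlinear, hquadratic]

lemma sum_lift4_eval_eq_neg_two_mul {σ β : Type*} [Fintype σ] [DecidableEq σ] [LinearOrder β]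
    (a : Finset σ → ZMod 2) (ha : ∀ S, a S ≠ 0 → 2 ≤ Sᶜ.card) {key : Finset σ → β}
    (hkey : Function.Injective key) :
    ∑ x : σ → ZMod 2, lift4 (∑ S, a S * ∏ j ∈ S, x j) =
      -(2 * ∑ p ∈ univ.filter (fun p : Finset σ × Finset σ => p.1 ∪ p.2 = univ ∧ key p.1 < key p.2),
        lift4 (a p.1 * a p.2)) := by
  have hlinear : ∀ S, lift4 (a S) * 2 ^ Sᶜ.card = 0 := fun S => by
    by_cases hS : a S = 0
    · rw [hS, map_zero, zero_mul]
    · rw [two_pow_eq_zero_zmod4 (ha S hS), mul_zero]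
  have hdiag : ∀ S, lift4 (a S * a S) * 2 ^ (S ∪ S)ᶜ.card = 0 := fun S => by
    rw [union_self, map_mul, mul_assoc, hlinear, mul_zero]
  have hpair : ∀ S T : Finset σ, 2 * (lift4 (a S * a T) * 2 ^ (S ∪ T)ᶜ.card) =
      if S ∪ T = univ then 2 * lift4 (a S * a T) else 0 := fun S T => by
    split_ifs with hST
    · rw [hST, compl_univ, card_empty, pow_zero, mul_one]
    · have hpos : (S ∪ T)ᶜ.card ≠ 0 := fun h => hST ((compl_eq_empty_iff _).mp (card_eq_zero.mp h))
      rw [mul_left_comm, ← pow_succ', two_pow_eq_zero_zmod4 (by omega), mul_zero]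
  rw [sum_lift4_eval_eq, sum_sum_eq_sum_diag_add_two_nsmul univ hkey
    (g := fun S T => lift4 (a S * a T) * 2 ^ (S ∪ T)ᶜ.card)
    fun S T => by rw [mul_comm (a S), union_comm]]
  simp only [hlinear, hdiag, sum_const_zero, mul_zero, zero_add, zero_sub, nsmul_eq_mul,
    Nat.cast_ofNat, mul_sum, hpair, ← sum_filter, filter_filter, univ_product_univ]
  rw [filter_congr fun _ _ => and_comm]

lemma injective_sum_two_pow_val (n : ℕ) :
    Function.Injective fun S : Finset (Fin n) => ∑ j ∈ S, 2 ^ (j : ℕ) := by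
  simpa [Function.comp_def] using
    (geomSum_injective le_rfl).comp (map_injective Fin.valEmbedding)

/-- `0-1` vectors are encoded as subsets `S, T ⊆ Fin n` (so `u + v ≥ 1` means `S ∪ T = univ`),
and each unordered pair is counted once via the strict comparison of the binary codes
`∑ j ∈ S, 2 ^ j < ∑ j ∈ T, 2 ^ j`. -/
theorem stmt18_general (n d : ℕ) (hn : 4 ≤ n) (hd2 : d ≤ n - 2)
    (f : MvPolynomial (Fin n) (ZMod 2)) (hdeg : f.totalDegree ≤ d)
    (hml : ∀ j, f.degreeOf j ≤ 1) :
    4 ∣ Nat.card {x : Fin n → ZMod 2 // eval x f = 0} ↔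
      ∑ ST ∈ Finset.univ.filter (fun ST : Finset (Fin n) × Finset (Fin n) =>
          ST.1 ∪ ST.2 = Finset.univ ∧
          n - d ≤ ST.1.card ∧ ST.1.card ≤ d ∧ n - d ≤ ST.2.card ∧ ST.2.card ≤ d ∧
          (∑ j ∈ ST.1, 2 ^ (j : ℕ)) < ∑ j ∈ ST.2, 2 ^ (j : ℕ)),
        coeff (∑ j ∈ ST.1, Finsupp.single j 1) f *
          coeff (∑ j ∈ ST.2, Finsupp.single j 1) f = 0 := by
  set a : Finset (Fin n) → ZMod 2 := fun S => coeff (∑ j ∈ S, Finsupp.single j 1) f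
  have hcard : ∀ S, a S ≠ 0 → S.card ≤ d := fun S hS =>
    (card_le_totalDegree_of_coeff_ne_zero hS).trans hdeg
  have hcompl : ∀ S, a S ≠ 0 → 2 ≤ Sᶜ.card := fun S hS => by
    have := hcard S hS
    rw [card_compl, Fintype.card_fin]
    omega
  have h4 : 4 ∣ Fintype.card (Fin n → ZMod 2) := by
    rw [Fintype.card_fun, ZMod.card, Fintype.card_fin]
    exact pow_dvd_pow 2 (by omega : 2 ≤ n)
  have hcard_pair : ∀ S T, S ∪ T = univ → a S * a T ≠ 0 →
      n - d ≤ S.card ∧ S.card ≤ d ∧ n - d ≤ T.card ∧ T.card ≤ d := fun S T hST hne => by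
    have hS := hcard S (left_ne_zero_of_mul hne)
    have hT := hcard T (right_ne_zero_of_mul hne)
    have hcover := card_union_le S T
    rw [hST, card_univ, Fintype.card_fin] at hcover
    omega
  simp only [eval_eq_sum_prod_of_degreeOf_le_one hml]
  rw [four_dvd_card_zeros_iff h4, sum_lift4_eval_eq_neg_two_mul a hcompl
    (injective_sum_two_pow_val n), neg_eq_zero, two_mul_sum_lift4_eq_zero_iff]
  refine Iff.of_eq (congrArg (· = 0) (sum_subset ?_ ?_).symm)
  · exact fun _ => by simp only [mem_filter]; tauto
  rintro ⟨S, T⟩ hmem hnot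
  simp only [mem_filter, mem_univ, true_and] at hmem hnot
  by_contra hne
  obtain ⟨hS₁, hS₂, hT₁, hT₂⟩ := hcard_pair S T hmem.1 hne
  exact hnot ⟨hmem.1, hS₁, hS₂, hT₁, hT₂, hmem.2⟩

/-- For `n ≥ 4`, `n/2 ≤ d ≤ n - 2` and a multilinear `f` over `F_2` of degree `≤ d`,
`|Z(f)| ≡ 0 (mod 4)` iff `Σ_{{u,v}} a_u a_v = 0`, summing over unordered pairs `{u, v}` with
`u, v ∈ {0,1}^n`, `|u|, |v| ∈ [n-d, d]`, `u + v ≥ (1,…,1)`. `0-1` vectors are encoded as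
subsets `S, T ⊆ Fin n` (so `u + v ≥ 1` means `S ∪ T = univ`), and each unordered pair is
counted once via the strict comparison of the binary codes `Σ_{j ∈ S} 2^j < Σ_{j ∈ T} 2^j`. -/
theorem stmt18 (n d : ℕ) (hn : 4 ≤ n) (hd1 : n ≤ 2 * d) (hd2 : d ≤ n - 2)
    (f : MvPolynomial (Fin n) (ZMod 2)) (hdeg : f.totalDegree ≤ d)
    (hml : ∀ j, f.degreeOf j ≤ 1) :
    4 ∣ Nat.card {x : Fin n → ZMod 2 // eval x f = 0} ↔
      ∑ ST ∈ Finset.univ.filter (fun ST : Finset (Fin n) × Finset (Fin n) =>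
          ST.1 ∪ ST.2 = Finset.univ ∧
          n - d ≤ ST.1.card ∧ ST.1.card ≤ d ∧ n - d ≤ ST.2.card ∧ ST.2.card ≤ d ∧
          (∑ j ∈ ST.1, 2 ^ (j : ℕ)) < ∑ j ∈ ST.2, 2 ^ (j : ℕ)),
        coeff (∑ j ∈ ST.1, Finsupp.single j 1) f *
          coeff (∑ j ∈ ST.2, Finsupp.single j 1) f = 0 :=
  stmt18_general n d hn hd2 f hdeg hml
end
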